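/- arXiv:0811.3991 — 3 statements merged into one kernel-verified Lean document; each statement's English description precedes it below -/
import Mathlib

section
/- Let R be a commutative ring, l ≥ 1, a ≥ 1, and work in the truncated polynomial ring R[x_1,…,x_a]/(x_1^l,…,x_a^l). Let α ∈ (ℤ/2)^a be even, set ε^α_i := ∏_{k<i}(-1)^{α_k}, and for r ≥ 0 define h^α_r := Σ_{r_1+⋯+r_a = (a−1)(l−1)+r} (ε^α_1 x_1)^{r_1} ⋯ (ε^α_a x_a)^{r_a}. Then for every j ∈ {1,…,a}, x_j · h^α_r = (-1)^{α_j} · x_{σ(j)} · h^α_r, where σ is the a-cycle sending j to j+1 for j < a and a to 1. -/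
open Finset

/-- The sign `ε^α_i := ∏_{j<i} (-1)^{α_j}`, as an integer. -/
def eps {a : ℕ} (α : Fin a → ZMod 2) (i : Fin a) : ℤ :=
  ∏ j ∈ Finset.univ.filter (fun j => j < i), (-1 : ℤ) ^ (α j).val

/-- The truncated polynomial ring `R[x_1,…,x_n]/(x_1^l,…,x_n^l)`. -/
abbrev TruncRing (R : Type*) [CommRing R] (n l : ℕ) : Type _ :=
  MvPolynomial (Fin n) R ⧸
    Ideal.span (Set.range fun i : Fin n => (MvPolynomial.X i : MvPolynomial (Fin n) R) ^ l)

/-- The images of the variables in the truncated polynomial ring. -/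
noncomputable def xv (R : Type*) [CommRing R] (n l : ℕ) (i : Fin n) : TruncRing R n l :=
  Ideal.Quotient.mk _ (MvPolynomial.X i)

/-- The polynomial `h^α_u` in given variables `v_1, …, v_n` of a commutative ring:
the sum over all compositions `u_1 + ⋯ + u_n = (n-1)(l-1) + u` of
`∏_i (ε^α_i v_i)^{u_i}`. -/
noncomputable def hpoly {Q : Type*} [CommRing Q] {n : ℕ} (l : ℕ) (α : Fin n → ZMod 2)
    (u : ℕ) (v : Fin n → Q) : Q :=
  ∑ c ∈ Finset.Nat.antidiagonalTuple n ((n - 1) * (l - 1) + u),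
    ∏ i, (((eps α i : ℤ) : Q) * v i) ^ (c i)

/-! ### Auxiliary lemmas -/

lemma eps_eq_pow {a : ℕ} (α : Fin a → ZMod 2) (i : Fin a) :
    eps α i = (-1 : ℤ) ^ (∑ j ∈ univ.filter (fun j => j < i), (α j).val) := by
  rw [eps, Finset.prod_pow_eq_pow_sum]

lemma even_sum_val {n : ℕ} (α : Fin (n+1) → ZMod 2) (hα : ∑ i, α i = 0) :
    Even (∑ i, (α i).val) := by
  have : ((∑ i, (α i).val : ℕ) : ZMod 2) = 0 := by
    push_cast
    simpa [ZMod.natCast_val] using hα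
  rw [ZMod.natCast_eq_zero_iff] at this
  exact (even_iff_two_dvd).2 this

lemma eps_succ {n : ℕ} (α : Fin (n+1) → ZMod 2) (hα : ∑ i, α i = 0) (j : Fin (n+1)) :
    eps α (j+1) = (-1:ℤ) ^ (α j).val * eps α j := by
  rcases lt_or_eq_of_le (Nat.lt_succ_iff.mp j.isLt) with hj | hj
  · have hv : (j+1).val = j.val + 1 := by
      rw [Fin.val_add_one_of_lt]
      exact Fin.lt_last_iff_ne_last.mpr (fun h => by simp [h] at hj)
    have h1 : (univ.filter (fun k => k < j + 1) : Finset (Fin (n+1))) =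
        insert j (univ.filter (fun k => k < j)) := by
      ext k
      simp only [mem_filter, mem_univ, true_and, mem_insert, Fin.lt_def, hv, Fin.ext_iff]
      omega
    rw [eps, h1, Finset.prod_insert (by simp)]
    rfl
  · have hjl : j = Fin.last n := Fin.ext hj
    subst hjl
    rw [Fin.last_add_one]
    have h0 : eps α (0 : Fin (n+1)) = 1 := by
      simp [eps, Fin.not_lt_zero]
    have h2 : (univ.filter (fun k => k < Fin.last n) : Finset (Fin (n+1))) =
        univ.erase (Fin.last n) := by
      ext k
      simp [Fin.lt_last_iff_ne_last]
    rw [h0, eps, h2, Finset.mul_prod_erase univ (fun k => (-1:ℤ)^(α k).val)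
      (mem_univ (Fin.last n)), Finset.prod_pow_eq_pow_sum]
    exact (Even.neg_one_pow (even_sum_val α hα)).symm

lemma xv_pow_eq_zero (R : Type*) [CommRing R] (m l : ℕ) {k : ℕ} (i : Fin m) (h : l ≤ k) :
    xv R m l i ^ k = 0 := by
  have h0 : xv R m l i ^ l = 0 := by
    rw [xv, ← map_pow]
    exact Ideal.Quotient.eq_zero_iff_mem.mpr (Ideal.subset_span ⟨i, rfl⟩)
  calc xv R m l i ^ k = xv R m l i ^ l * xv R m l i ^ (k - l) := by
        rw [← pow_add]; congr 1; omega
    _ = 0 := by rw [h0, zero_mul]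

lemma dead (R : Type*) [CommRing R] {l n : ℕ} (hn : 1 ≤ n) (α : Fin (n+1) → ZMod 2) (r : ℕ)
    (p q : Fin (n+1)) (hpq : p ≠ q)
    (c : Fin (n+1) → ℕ) (hc : ∑ i, c i = n*(l-1)+r)
    (hdead : ¬(0 < c q ∧ c q + 1 ≤ l ∧ c p + 2 ≤ l)) :
    xv R (n+1) l p *
      ∏ i, (((eps α i : ℤ) : TruncRing R (n+1) l) * xv R (n+1) l i) ^ (c i) = 0 := by
  set x := xv R (n+1) l with hx
  by_cases h1 : l ≤ c p + 1
  · rw [← Finset.mul_prod_erase univ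
      (fun i => (((eps α i : ℤ) : TruncRing R (n+1) l) * x i) ^ (c i)) (mem_univ p)]
    have key : x p * (((eps α p : ℤ) : TruncRing R (n+1) l) * x p) ^ (c p) = 0 := by
      rw [mul_pow, ← mul_assoc, mul_comm (x p), mul_assoc, ← pow_succ']
      rw [hx, xv_pow_eq_zero R (n+1) l p h1, mul_zero]
    rw [← mul_assoc, key, zero_mul]
  by_cases h2 : l ≤ c q
  · have key : (((eps α q : ℤ) : TruncRing R (n+1) l) * x q) ^ (c q) = 0 := by
      rw [mul_pow, hx, xv_pow_eq_zero R (n+1) l q h2, mul_zero]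
    rw [Finset.prod_eq_zero (mem_univ q) key, mul_zero]
  by_cases h3 : ∃ i, l ≤ c i
  · obtain ⟨i, hi⟩ := h3
    have key : (((eps α i : ℤ) : TruncRing R (n+1) l) * x i) ^ (c i) = 0 := by
      rw [mul_pow, hx, xv_pow_eq_zero R (n+1) l i hi, mul_zero]
    rw [Finset.prod_eq_zero (mem_univ i) key, mul_zero]
  exfalso
  push_neg at h3
  have hq0 : c q = 0 := by omega
  have hs1 : ∑ i, c i = c p + ∑ i ∈ univ.erase p, c i :=
    (Finset.add_sum_erase univ c (mem_univ p)).symm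
  have hs2 : ∑ i ∈ univ.erase p, c i = c q + ∑ i ∈ (univ.erase p).erase q, c i :=
    (Finset.add_sum_erase _ c (Finset.mem_erase.mpr ⟨(Ne.symm hpq), mem_univ q⟩)).symm
  have hcard : ((univ.erase p).erase q).card = n - 1 := by
    rw [Finset.card_erase_of_mem (Finset.mem_erase.mpr ⟨(Ne.symm hpq), mem_univ q⟩),
      Finset.card_erase_of_mem (mem_univ p)]
    simp
  have hb : ∑ i ∈ (univ.erase p).erase q, c i ≤ ((univ.erase p).erase q).card * (l - 1) := by
    apply Finset.sum_le_card_nsmul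
    intro i _
    exact Nat.le_sub_one_of_lt (h3 i)
  rw [hcard] at hb
  obtain ⟨k, rfl⟩ : ∃ k, n = k + 1 := ⟨n - 1, by omega⟩
  have hmul : (k+1)*(l-1) = k*(l-1) + (l-1) := Nat.succ_mul k (l-1)
  simp only [Nat.add_sub_cancel] at hb
  generalize k * (l-1) = A at *
  omega

lemma prod_extract {Q : Type*} [CommMonoid Q] {m : ℕ} (f : Fin m → Q) (p q : Fin m)
    (hpq : p ≠ q) :
    ∏ i, f i = f p * f q * ∏ i ∈ (univ.erase p).erase q, f i := by
  rw [← Finset.mul_prod_erase univ f (mem_univ p),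
      ← Finset.mul_prod_erase (univ.erase p) f (mem_erase.mpr ⟨Ne.symm hpq, mem_univ q⟩),
      mul_assoc]

lemma sign_eq {n : ℕ} (α : Fin (n+1) → ZMod 2) (hα : ∑ i, α i = 0) (j : Fin (n+1))
    (hj : j ≠ j + 1) (c : Fin (n+1) → ℕ) (hcq : 0 < c (j+1)) :
    (∏ i, eps α i ^ c i) =
      (-1:ℤ) ^ (α j).val *
        ∏ i, eps α i ^
          (Function.update (Function.update c j (c j + 1)) (j+1) (c (j+1) - 1) i) := by
  set c' := Function.update (Function.update c j (c j + 1)) (j+1) (c (j+1) - 1) with hc'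
  obtain ⟨e, he⟩ : ∃ e, c (j+1) = e + 1 := ⟨c (j+1) - 1, by omega⟩
  have h1 : c' j = c j + 1 := by
    rw [hc', Function.update_of_ne hj, Function.update_self]
  have h2 : c' (j+1) = e := by rw [hc', Function.update_self]; omega
  have h3 : ∀ i ∈ (univ.erase j).erase (j+1), c' i = c i := by
    intro i hi
    rw [mem_erase, mem_erase] at hi
    rw [hc', Function.update_of_ne hi.1, Function.update_of_ne hi.2.1]
  rw [prod_extract (fun i => eps α i ^ c i) j (j+1) hj,
      prod_extract (fun i => eps α i ^ c' i) j (j+1) hj]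
  simp only [h1, h2, he]
  rw [show (∏ i ∈ (univ.erase j).erase (j+1), eps α i ^ c' i)
      = ∏ i ∈ (univ.erase j).erase (j+1), eps α i ^ c i from
    Finset.prod_congr rfl (fun i hi => by rw [h3 i hi])]
  rw [eps_succ α hα j]
  ring

lemma mono_eq {Q : Type*} [CommRing Q] {n : ℕ} (x : Fin (n+1) → Q) (j : Fin (n+1))
    (hj : j ≠ j + 1) (c : Fin (n+1) → ℕ) (hcq : 0 < c (j+1)) :
    x j * ∏ i, x i ^ c i =
      x (j+1) * ∏ i, x i ^
        (Function.update (Function.update c j (c j + 1)) (j+1) (c (j+1) - 1) i) := by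
  set c' := Function.update (Function.update c j (c j + 1)) (j+1) (c (j+1) - 1) with hc'
  obtain ⟨e, he⟩ : ∃ e, c (j+1) = e + 1 := ⟨c (j+1) - 1, by omega⟩
  have h1 : c' j = c j + 1 := by
    rw [hc', Function.update_of_ne hj, Function.update_self]
  have h2 : c' (j+1) = e := by rw [hc', Function.update_self]; omega
  have h3 : ∀ i ∈ (univ.erase j).erase (j+1), c' i = c i := by
    intro i hi
    rw [mem_erase, mem_erase] at hi
    rw [hc', Function.update_of_ne hi.1, Function.update_of_ne hi.2.1]
  rw [prod_extract (fun i => x i ^ c i) j (j+1) hj,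
      prod_extract (fun i => x i ^ c' i) j (j+1) hj]
  simp only [h1, h2, he]
  rw [show (∏ i ∈ (univ.erase j).erase (j+1), x i ^ c' i)
      = ∏ i ∈ (univ.erase j).erase (j+1), x i ^ c i from
    Finset.prod_congr rfl (fun i hi => by rw [h3 i hi])]
  ring

lemma term_split {Q : Type*} [CommRing Q] {m : ℕ} (α : Fin m → ZMod 2) (x : Fin m → Q)
    (c : Fin m → ℕ) :
    ∏ i, (((eps α i : ℤ) : Q) * x i) ^ (c i) =
      ((∏ i, eps α i ^ c i : ℤ) : Q) * ∏ i, x i ^ c i := by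
  push_cast
  rw [← Finset.prod_mul_distrib]
  simp [mul_pow]

lemma term_eq {Q : Type*} [CommRing Q] {n : ℕ} (α : Fin (n+1) → ZMod 2)
    (hα : ∑ i, α i = 0) (x : Fin (n+1) → Q) (j : Fin (n+1)) (hj : j ≠ j + 1)
    (c : Fin (n+1) → ℕ) (hcq : 0 < c (j+1)) :
    x j * ∏ i, (((eps α i : ℤ) : Q) * x i) ^ (c i) =
      (-1:Q) ^ (α j).val *
        (x (j+1) * ∏ i, (((eps α i : ℤ) : Q) * x i) ^
          (Function.update (Function.update c j (c j + 1)) (j+1) (c (j+1) - 1) i)) := by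
  set c' := Function.update (Function.update c j (c j + 1)) (j+1) (c (j+1) - 1) with hc'
  rw [term_split α x c, term_split α x c']
  have hs : ((∏ i, eps α i ^ c i : ℤ) : Q) =
      (-1:Q) ^ (α j).val * ((∏ i, eps α i ^ c' i : ℤ) : Q) := by
    rw [sign_eq α hα j hj c hcq, ← hc']
    push_cast
    ring
  have hm := mono_eq x j hj c hcq
  rw [← hc'] at hm
  calc x j * (((∏ i, eps α i ^ c i : ℤ) : Q) * ∏ i, x i ^ c i)
      = ((∏ i, eps α i ^ c i : ℤ) : Q) * (x j * ∏ i, x i ^ c i) := by ring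
    _ = ((-1:Q) ^ (α j).val * ((∏ i, eps α i ^ c' i : ℤ) : Q)) *
        (x (j+1) * ∏ i, x i ^ c' i) := by rw [hs, hm]
    _ = (-1:Q) ^ (α j).val *
        (x (j+1) * (((∏ i, eps α i ^ c' i : ℤ) : Q) * ∏ i, x i ^ c' i)) := by ring

lemma sum_update_update {m : ℕ} (c : Fin m → ℕ) (p q : Fin m) (hpq : p ≠ q)
    (h : 0 < c q) :
    ∑ i, Function.update (Function.update c p (c p + 1)) q (c q - 1) i = ∑ i, c i := by
  have hp : p ∈ (univ : Finset (Fin m)) \ {q} := by simp [hpq]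
  rw [Finset.sum_update_of_mem (mem_univ q), Finset.sum_update_of_mem hp]
  have e1 : ∑ i, c i = c q + ∑ i ∈ univ \ {q}, c i := by
    rw [← Finset.erase_eq]
    exact (Finset.add_sum_erase univ c (mem_univ q)).symm
  have e2 : ∑ i ∈ univ \ {q}, c i = c p + ∑ i ∈ (univ \ {q}) \ {p}, c i := by
    rw [← Finset.erase_eq, ← Finset.erase_eq]
    exact (Finset.add_sum_erase _ c (mem_erase.mpr ⟨hpq, mem_univ p⟩)).symm
  omega

theorem x_mul_hpoly (R : Type*) [CommRing R] (l : ℕ) (hl : 1 ≤ l) (n : ℕ)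
    (α : Fin (n + 1) → ZMod 2) (hα : ∑ i, α i = 0) (r : ℕ) :
    ∀ j : Fin (n + 1),
      xv R (n + 1) l j * hpoly l α r (xv R (n + 1) l) =
        ((-1 : TruncRing R (n + 1) l) ^ (α j).val) *
          (xv R (n + 1) l (j + 1) * hpoly l α r (xv R (n + 1) l)) := by
  intro j
  rcases Nat.eq_zero_or_pos n with hn | hn
  · subst hn
    have hj0 : j = 0 := Fin.ext (by omega)
    have hj1 : j + 1 = j := Fin.ext (by omega)
    have hα0 : α j = 0 := by rw [hj0]; simpa using hα
    rw [hj1, hα0]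
    simp
  · have hj : j ≠ j + 1 := by
      intro hc
      have h10 : (0 : Fin (n+1)) = 1 :=
        add_left_cancel (a := j) (b := (0 : Fin (n+1))) (c := 1) (by rw [add_zero, ← hc])
      have hv1 : (1 : Fin (n+1)).val = 1 := by
        rw [Fin.val_one']
        exact Nat.mod_eq_of_lt (by omega)
      rw [Fin.ext_iff, Fin.val_zero, hv1] at h10
      exact absurd h10 (by omega)
    set Q := TruncRing R (n+1) l with hQ
    set x := xv R (n+1) l with hx
    simp only [hpoly]
    rw [Finset.mul_sum, Finset.mul_sum, Finset.mul_sum]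
    set D := (n + 1 - 1) * (l - 1) + r with hD
    set S := Finset.Nat.antidiagonalTuple (n+1) D with hS
    have hsum : ∀ c ∈ S, ∑ i, c i = n * (l-1) + r := by
      intro c hc
      rw [Finset.Nat.mem_antidiagonalTuple] at hc
      simpa [hD] using hc
    set S₁ := S.filter (fun c => 0 < c (j+1) ∧ c (j+1) + 1 ≤ l ∧ c j + 2 ≤ l) with hS₁
    set S₂ := S.filter (fun c => 0 < c j ∧ c j + 1 ≤ l ∧ c (j+1) + 2 ≤ l) with hS₂
    have step1 : ∑ c ∈ S, x j * ∏ i, (((eps α i : ℤ) : Q) * x i) ^ (c i) =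
        ∑ c ∈ S₁, x j * ∏ i, (((eps α i : ℤ) : Q) * x i) ^ (c i) := by
      refine (Finset.sum_subset (Finset.filter_subset _ _) ?_).symm
      intro c hc hnc
      refine dead R (by omega) α r j (j+1) hj c (hsum c hc) ?_
      intro hcond
      exact hnc (Finset.mem_filter.mpr ⟨hc, hcond⟩)
    have step2 : ∑ c ∈ S, (-1:Q) ^ (α j).val *
          (x (j+1) * ∏ i, (((eps α i : ℤ) : Q) * x i) ^ (c i)) =
        ∑ c ∈ S₂, (-1:Q) ^ (α j).val *
          (x (j+1) * ∏ i, (((eps α i : ℤ) : Q) * x i) ^ (c i)) := by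
      refine (Finset.sum_subset (Finset.filter_subset _ _) ?_).symm
      intro c hc hnc
      have hz : x (j+1) * ∏ i, (((eps α i : ℤ) : Q) * x i) ^ (c i) = 0 := by
        refine dead R (by omega) α r (j+1) j (Ne.symm hj) c (hsum c hc) ?_
        intro hcond
        exact hnc (Finset.mem_filter.mpr ⟨hc, hcond⟩)
      rw [hz, mul_zero]
    rw [step1, step2]
    set φ : (Fin (n+1) → ℕ) → (Fin (n+1) → ℕ) :=
      fun c => Function.update (Function.update c j (c j + 1)) (j+1) (c (j+1) - 1) with hφ
    set ψ : (Fin (n+1) → ℕ) → (Fin (n+1) → ℕ) :=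
      fun d => Function.update (Function.update d (j+1) (d (j+1) + 1)) j (d j - 1) with hψ
    have φj : ∀ c, φ c j = c j + 1 := fun c => by
      rw [hφ]; simp only []
      rw [Function.update_of_ne hj, Function.update_self]
    have φq : ∀ c, φ c (j+1) = c (j+1) - 1 := fun c => by
      rw [hφ]; simp only []
      rw [Function.update_self]
    have φo : ∀ c (i : Fin (n+1)), i ≠ j → i ≠ j + 1 → φ c i = c i := fun c i h1 h2 => by
      rw [hφ]; simp only []
      rw [Function.update_of_ne h2, Function.update_of_ne h1]
    have ψj : ∀ d, ψ d j = d j - 1 := fun d => by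
      rw [hψ]; simp only []
      rw [Function.update_self]
    have ψq : ∀ d, ψ d (j+1) = d (j+1) + 1 := fun d => by
      rw [hψ]; simp only []
      rw [Function.update_of_ne (Ne.symm hj), Function.update_self]
    have ψo : ∀ d (i : Fin (n+1)), i ≠ j → i ≠ j + 1 → ψ d i = d i := fun d i h1 h2 => by
      rw [hψ]; simp only []
      rw [Function.update_of_ne h1, Function.update_of_ne h2]
    refine Finset.sum_nbij' φ ψ ?_ ?_ ?_ ?_ ?_
    · intro c hc
      rw [hS₁, Finset.mem_filter] at hc
      obtain ⟨hcS, hc1, hc2, hc3⟩ := hc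
      rw [hS₂, Finset.mem_filter]
      refine ⟨?_, ?_, ?_, ?_⟩
      · rw [hS, Finset.Nat.mem_antidiagonalTuple]
        rw [hφ]; simp only []
        rw [sum_update_update c j (j+1) hj hc1]
        rw [hS, Finset.Nat.mem_antidiagonalTuple] at hcS
        exact hcS
      · rw [φj]; omega
      · rw [φj]; omega
      · rw [φq]; omega
    · intro d hd
      rw [hS₂, Finset.mem_filter] at hd
      obtain ⟨hdS, hd1, hd2, hd3⟩ := hd
      rw [hS₁, Finset.mem_filter]
      refine ⟨?_, ?_, ?_, ?_⟩
      · rw [hS, Finset.Nat.mem_antidiagonalTuple]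
        rw [hψ]; simp only []
        rw [sum_update_update d (j+1) j (Ne.symm hj) hd1]
        rw [hS, Finset.Nat.mem_antidiagonalTuple] at hdS
        exact hdS
      · rw [ψq]; omega
      · rw [ψq]; omega
      · rw [ψj]; omega
    · intro c hc
      rw [hS₁, Finset.mem_filter] at hc
      obtain ⟨hcS, hc1, hc2, hc3⟩ := hc
      funext i
      rcases eq_or_ne i j with rfl | h1
      · rw [ψj, φj]; omega
      rcases eq_or_ne i (j+1) with rfl | h2
      · rw [ψq, φq]; omega
      · rw [ψo _ _ h1 h2, φo _ _ h1 h2]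
    · intro d hd
      rw [hS₂, Finset.mem_filter] at hd
      obtain ⟨hdS, hd1, hd2, hd3⟩ := hd
      funext i
      rcases eq_or_ne i j with rfl | h1
      · rw [φj, ψj]; omega
      rcases eq_or_ne i (j+1) with rfl | h2
      · rw [φq, ψq]; omega
      · rw [φo _ _ h1 h2, ψo _ _ h1 h2]
    · intro c hc
      rw [hS₁, Finset.mem_filter] at hc
      exact term_eq α hα x j hj c hc.2.1
end

section
/- Let a ≥ 2, l ≥ 1, and suppose a·l is odd (i.e., both a and l are odd). Suppose θ : (ℤ/2)^a → R (R a commutative ring) satisfies θ(α^{(j)}) = (-1)^{l-1}·(-1)^{α_j+α_{j-1}}·θ(α) for all 1 < j ≤ a and θ(α^{(1)}) = (-1)^{l-1}·(-1)^{α_1+α_a}·θ(α), for all α with an odd number of 1s. Then 2·θ(α) = 0 for every α with an odd number of 1s. -/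
open Finset

/-- Flip (add 1 to) the entries of `α` at positions `j` and `k`. -/
def flip2 {a : ℕ} (α : Fin a → ZMod 2) (j k : Fin a) : Fin a → ZMod 2 :=
  fun i => α i + (if i = j then 1 else 0) + (if i = k then 1 else 0)

lemma sum_flip2 {a : ℕ} (α : Fin a → ZMod 2) (j k : Fin a) :
    ∑ i, flip2 α j k i = ∑ i, α i := by
  simp [flip2, Finset.sum_add_distrib]
  rw [add_assoc, (by rfl : (1:ZMod 2) + 1 = 0), add_zero]

lemma flip2_comm {a : ℕ} (α : Fin a → ZMod 2) (j k : Fin a) :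
    flip2 α j k = flip2 α k j := by
  funext i; simp only [flip2]; ring

lemma flip2_cancel {a : ℕ} (α : Fin a → ZMod 2) (x y z : Fin a) :
    flip2 (flip2 α x y) z y = flip2 α x z := by
  funext i; simp only [flip2]
  have h : ∀ b : ZMod 2, b + b = 0 := by decide
  linear_combination h (if i = y then 1 else 0)

lemma fin_succ_sub_one (n k : ℕ) (h : k + 1 < n + 2) :
    (⟨k+1, h⟩ : Fin (n+2)) - 1 = ⟨k, by omega⟩ := by
  apply Fin.ext
  simp [Fin.sub_def]
  rw [show n+1+(k+1) = k + (n+2) from by omega, Nat.add_mod_right]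
  exact Nat.mod_eq_of_lt (by omega)

lemma pow_val_succ (x : ZMod 2) (R : Type*) [CommRing R] :
    (-1:R)^((x+1).val) = -(-1:R)^x.val := by
  have hx : x = 0 ∨ x = 1 := by revert x; decide
  rcases hx with rfl | rfl
  · rw [show ((0:ZMod 2)+1).val = 1 from rfl, show ((0:ZMod 2)).val = 0 from rfl]; ring
  · rw [show ((1:ZMod 2)+1).val = 0 from rfl, show ((1:ZMod 2)).val = 1 from rfl]; ring

lemma neg_one_pow_sq (R : Type*) [CommRing R] (m : ℕ) :
    (-1:R)^m * (-1:R)^m = 1 := by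
  rw [← pow_add, ← two_mul, pow_mul, neg_one_sq, one_pow]

/-- If `a·l` is odd, any family of coefficients `θ` satisfying the compatibility system of an
odd skew cycle is killed by `2` on every odd tuple. -/
theorem odd_skew_coefficients (n l : ℕ) (hl : 1 ≤ l) (hodd : Odd ((n + 2) * l))
    (R : Type*) [CommRing R] (θ : (Fin (n + 2) → ZMod 2) → R)
    (h1 : ∀ α : Fin (n + 2) → ZMod 2, ∑ i, α i = 1 →
      ∀ j : Fin (n + 2), 1 ≤ j.val →
        θ (flip2 α j (j - 1)) =
          (-1 : R) ^ (l - 1) * (-1 : R) ^ ((α j).val + (α (j - 1)).val) * θ α)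
    (h2 : ∀ α : Fin (n + 2) → ZMod 2, ∑ i, α i = 1 →
      θ (flip2 α 0 (Fin.last (n + 1))) =
        (-1 : R) ^ (l - 1) * (-1 : R) ^ ((α 0).val + (α (Fin.last (n + 1))).val) * θ α) :
    ∀ α : Fin (n + 2) → ZMod 2, ∑ i, α i = 1 → 2 * θ α = 0 := by
  intro α hα
  obtain ⟨ha, hlo⟩ := Nat.odd_mul.mp hodd
  have hn : Odd n := by rcases ha with ⟨m, hm⟩; exact ⟨m - 1, by omega⟩
  have hl1 : (-1:R)^(l-1) = 1 := by
    rcases hlo with ⟨m, hm⟩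
    exact Even.neg_one_pow ⟨m, by omega⟩
  have key : ∀ k, 1 ≤ k → ∀ hk : k < n + 2,
      θ (flip2 α 0 ⟨k, hk⟩) =
        (-1:R)^(k-1) * (-1:R)^((α 0).val + (α ⟨k, hk⟩).val) * θ α := by
    intro k hk1
    induction k, hk1 using Nat.le_induction with
    | base =>
      intro hk
      have hj := h1 α hα ⟨1, hk⟩ (by simp)
      rw [fin_succ_sub_one n 0 hk] at hj
      rw [flip2_comm]
      rw [show (⟨0, by omega⟩ : Fin (n+2)) = 0 from rfl] at hj
      rw [hj, hl1, pow_zero, one_mul, one_mul, Nat.add_comm]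
    | succ k hk1 ih =>
      intro hk
      have hk' : k < n + 2 := by omega
      have hβ : ∑ i, flip2 α 0 ⟨k, hk'⟩ i = 1 := by rw [sum_flip2]; exact hα
      have hj := h1 _ hβ ⟨k+1, hk⟩ (by simp)
      rw [fin_succ_sub_one n k hk, flip2_cancel] at hj
      have hv1 : flip2 α 0 ⟨k, hk'⟩ ⟨k+1, hk⟩ = α ⟨k+1, hk⟩ := by
        simp only [flip2]
        rw [if_neg (by simp [Fin.ext_iff]), if_neg (by simp [Fin.ext_iff]),
          add_zero, add_zero]
      have hv2 : ∀ h : k < n + 2, flip2 α 0 ⟨k, hk'⟩ ⟨k, h⟩ = α ⟨k, hk'⟩ + 1 := by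
        intro h
        simp only [flip2]
        rw [if_neg (by simp [Fin.ext_iff]; omega)]
        simp
      rw [hv1, hv2, ih hk', hl1, one_mul, pow_add, pow_val_succ] at hj
      rw [hj]
      have hbb := neg_one_pow_sq R ((α ⟨k, hk'⟩).val)
      have hkk : (-1:R)^k = -(-1:R)^(k-1) := by
        conv_lhs => rw [show k = (k-1)+1 from by omega]
        rw [pow_succ]; ring
      rw [pow_add, pow_add, Nat.add_sub_cancel, hkk]
      linear_combination (-((-1:R)^((α ⟨k+1, hk⟩).val) * (-1:R)^(k-1) *
        (-1:R)^((α 0).val) * θ α)) * hbb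
  have e1 := key (n+1) (by omega) (by omega)
  have e2 := h2 α hα
  rw [hl1, one_mul] at e2
  have hlast : Fin.last (n+1) = (⟨n+1, by omega⟩ : Fin (n+2)) := rfl
  rw [hlast] at e2
  rw [show n + 1 - 1 = n from rfl, Odd.neg_one_pow hn] at e1
  have h3 := e1.symm.trans e2
  have hs := neg_one_pow_sq R ((α 0).val + (α ⟨n+1, by omega⟩).val)
  linear_combination (-(-1:R)^((α 0).val + (α ⟨n+1, by omega⟩).val)) * h3 +
    (-2 * θ α) * hs
end

section
/- Fix l ≥ 1 and d ≥ 1. Let M_d(l) be the set of l-multipartitions of d (tuples λ = (λ^{(1)},…,λ^{(l)}) of partitions with |λ^{(1)}|+⋯+|λ^{(l)}| = d), and let P_d(l) be the set of partitions μ = (μ_1 ≥ ⋯ ≥ μ_r > 0) satisfying r + Σ_i ⌊μ_i/l⌋ ≤ d. Define φ : M_d(l) → P_d(l) by sending λ to the partition whose parts are (λ^{(r)}_i − 1)·l + (r − 1) for all r ∈ {1,…,l} and all parts λ^{(r)}_i of λ^{(r)}. Then φ is a well-defined bijection from M_d(l) onto P_d(l). -/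
open Finset

/-- The map `φ` on the level of multisets: an `l`-tuple of multisets of parts is sent to the
multiset of all `(p-1)·l + r` for `p` a part of the `r`-th component (`0`-indexed `r`),
discarding zero parts. -/
def phiMap (l : ℕ) (lam : Fin l → Multiset ℕ) : Multiset ℕ :=
  Multiset.filter (fun p => 0 < p)
    (∑ r : Fin l, (lam r).map (fun p => (p - 1) * l + r.val))

section Aux

/-- The inverse map: `μ` is sent to the tuple whose `r`-th component consists of `x/l + 1`
for each part `x ≡ r (mod l)`, together with extra parts `1` in component `0`. -/
def psiMap (l d : ℕ) (μ : Multiset ℕ) (r : Fin l) : Multiset ℕ :=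
  (μ.filter (fun x => x % l = r.val)).map (fun x => x / l + 1) +
    (if r.val = 0 then
      Multiset.replicate (d - (Multiset.card μ + (μ.map (fun p => p / l)).sum)) 1 else 0)

lemma mfilter_sum {ι : Type*} (s : Finset ι) (f : ι → Multiset ℕ)
    (p : ℕ → Prop) [DecidablePred p] :
    (∑ i ∈ s, f i).filter p = ∑ i ∈ s, (f i).filter p := by
  classical
  induction s using Finset.induction_on with
  | empty => simp
  | insert _ _ h ih => simp [Finset.sum_insert h, Multiset.filter_add, ih]

lemma mmap_sum {ι : Type*} (s : Finset ι) (f : ι → Multiset ℕ) (g : ℕ → ℕ) :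
    (∑ i ∈ s, f i).map g = ∑ i ∈ s, (f i).map g := by
  classical
  induction s using Finset.induction_on with
  | empty => simp
  | insert _ _ h ih => simp [Finset.sum_insert h, ih]

lemma mcard_sum {ι : Type*} (s : Finset ι) (f : ι → Multiset ℕ) :
    Multiset.card (∑ i ∈ s, f i) = ∑ i ∈ s, Multiset.card (f i) := by
  classical
  induction s using Finset.induction_on with
  | empty => simp
  | insert _ _ h ih => simp [Finset.sum_insert h, ih]

lemma msum_sum {ι : Type*} (s : Finset ι) (f : ι → Multiset ℕ) :
    (∑ i ∈ s, f i).sum = ∑ i ∈ s, (f i).sum := by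
  classical
  induction s using Finset.induction_on with
  | empty => simp
  | insert _ _ h ih => simp [Finset.sum_insert h, ih]

lemma res_mod (l : ℕ) (r : Fin l) (p : ℕ) : ((p - 1) * l + r.val) % l = r.val := by
  rw [Nat.add_comm, Nat.add_mul_mod_self_right, Nat.mod_eq_of_lt r.isLt]

lemma res_div (l : ℕ) (hl : 0 < l) (r : Fin l) (p : ℕ) : ((p - 1) * l + r.val) / l = p - 1 := by
  rw [Nat.add_comm, Nat.add_mul_div_right _ _ hl, Nat.div_eq_of_lt r.isLt, Nat.zero_add]

lemma S_filter_res (l : ℕ) (lam : Fin l → Multiset ℕ) (r' : Fin l) :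
    (∑ r : Fin l, (lam r).map (fun p => (p - 1) * l + r.val)).filter
      (fun x => x % l = r'.val)
      = (lam r').map (fun p => (p - 1) * l + r'.val) := by
  rw [mfilter_sum]
  rw [Finset.sum_eq_single r']
  · rw [Multiset.filter_map, Multiset.filter_eq_self.mpr]
    intro a _
    simp [Function.comp, res_mod]
    exact Nat.mod_eq_of_lt r'.isLt
  · intro r _ hr
    rw [Multiset.filter_map, Multiset.filter_eq_nil.mpr, Multiset.map_zero]
    intro a _
    simp only [Function.comp, res_mod]
    exact fun h => hr (Fin.ext h)
  · simp

lemma pos_decomp (T : Multiset ℕ) :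
    T = T.filter (fun p => 0 < p) + Multiset.replicate (T.count 0) 0 := by
  conv_lhs => rw [← Multiset.filter_add_not (fun p => 0 < p) T]
  congr 1
  have : T.filter (fun p => ¬ 0 < p) = T.filter (· = 0) :=
    Multiset.filter_congr (fun x _ => by omega)
  rw [this, Multiset.filter_eq']

lemma card_add_pred (m : Multiset ℕ) (h : ∀ p ∈ m, 0 < p) :
    Multiset.card m + (m.map (fun p => p - 1)).sum = m.sum := by
  induction m using Multiset.induction_on with
  | empty => simp
  | cons a s ih =>
      simp only [Multiset.card_cons, Multiset.map_cons, Multiset.sum_cons]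
      have ha := h a (Multiset.mem_cons_self a s)
      have hs := ih (fun p hp => h p (Multiset.mem_cons_of_mem hp))
      omega

lemma S_sum_id (l : ℕ) (hl : 0 < l) (lam : Fin l → Multiset ℕ)
    (hpos : ∀ r, ∀ p ∈ lam r, 0 < p) :
    Multiset.card (∑ r : Fin l, (lam r).map (fun p => (p - 1) * l + r.val)) +
      ((∑ r : Fin l, (lam r).map (fun p => (p - 1) * l + r.val)).map (fun p => p / l)).sum
      = ∑ r : Fin l, (lam r).sum := by
  rw [mcard_sum, mmap_sum, msum_sum, ← Finset.sum_add_distrib]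
  refine Finset.sum_congr rfl fun r _ => ?_
  rw [Multiset.card_map, Multiset.map_map]
  have he : ((fun p => p / l) ∘ fun p => (p - 1) * l + r.val) = fun p => p - 1 :=
    funext fun p => res_div l hl r p
  rw [he, card_add_pred _ (hpos r)]

lemma phi_key (l d : ℕ) (hl : 0 < l) (lam : Fin l → Multiset ℕ)
    (hpos : ∀ r, ∀ p ∈ lam r, 0 < p) (hsum : ∑ r : Fin l, (lam r).sum = d) :
    Multiset.card (phiMap l lam) + ((phiMap l lam).map (fun p => p / l)).sum
      + (∑ r : Fin l, (lam r).map (fun p => (p - 1) * l + r.val)).count 0 = d := by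
  have hS := S_sum_id l hl lam hpos
  rw [hsum] at hS
  set S := ∑ r : Fin l, (lam r).map (fun p => (p - 1) * l + r.val) with hSdef
  have hphi : phiMap l lam = S.filter (fun p => 0 < p) := rfl
  have hdec : S = phiMap l lam + Multiset.replicate (S.count 0) 0 := by
    rw [hphi]; exact pos_decomp S
  rw [hdec] at hS
  simp only [Multiset.card_add, Multiset.card_replicate, Multiset.map_add,
    Multiset.map_replicate, Multiset.sum_add, Multiset.sum_replicate, Nat.zero_div,
    smul_eq_mul, Nat.mul_zero, Nat.add_zero] at hS
  omega

lemma filter_res_partition (l : ℕ) (hl : 0 < l) (μ : Multiset ℕ) :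
    ∑ r : Fin l, μ.filter (fun x => x % l = r.val) = μ := by
  induction μ using Multiset.induction_on with
  | empty => simp
  | cons a s ih =>
      simp only [Multiset.filter_cons]
      rw [Finset.sum_add_distrib, ih]
      have ha : a % l < l := Nat.mod_lt _ hl
      have : (∑ r : Fin l, if a % l = r.val then ({a} : Multiset ℕ) else 0) = {a} := by
        rw [Finset.sum_congr rfl
          (fun r _ => if_congr (by rw [← Fin.ext_iff (a := ⟨a % l, ha⟩)]) rfl rfl)]
        simp [Finset.sum_ite_eq]
      rw [this, Multiset.singleton_add]

lemma ite_zero_sum {M : Type*} [AddCommMonoid M] (l : ℕ) (hl : 0 < l) (a : M) :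
    ∑ r : Fin l, (if r.val = 0 then a else 0) = a := by
  have : (∑ r : Fin l, if r.val = 0 then a else 0)
      = ∑ r : Fin l, if r = ⟨0, hl⟩ then a else 0 := by
    refine Finset.sum_congr rfl fun r _ => if_congr ?_ rfl rfl
    rw [Fin.ext_iff]
  rw [this, Finset.sum_ite_eq']
  simp

lemma sum_divsucc (l : ℕ) (μ : Multiset ℕ) :
    (μ.map (fun x => x / l + 1)).sum = (μ.map (fun p => p / l)).sum + Multiset.card μ := by
  induction μ using Multiset.induction_on with
  | empty => simp
  | cons a s ih =>
      simp only [Multiset.map_cons, Multiset.sum_cons, Multiset.card_cons, ih]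
      omega

lemma map_recover (l : ℕ) (hl : 0 < l) (r : Fin l) (m : Multiset ℕ)
    (hm : ∀ p ∈ m, 0 < p) :
    ((m.map (fun p => (p - 1) * l + r.val)).map (fun x => x / l + 1)) = m := by
  rw [Multiset.map_map]
  have : ∀ p ∈ m, ((fun x => x / l + 1) ∘ fun p => (p - 1) * l + r.val) p = id p := by
    intro p hp
    have := hm p hp
    simp only [Function.comp, res_div l hl r p, id]
    omega
  rw [Multiset.map_congr rfl this, Multiset.map_id]

end Aux

/-- `φ` is a bijection from the set of `l`-multipartitions of `d` onto the set of
partitions `μ` with `(number of parts) + Σ_i ⌊μ_i/l⌋ ≤ d`. -/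
theorem phi_bijective (l d : ℕ) (hl : 1 ≤ l) (hd : 1 ≤ d) :
    Set.BijOn (phiMap l)
      {lam : Fin l → Multiset ℕ |
        (∀ r, ∀ p ∈ lam r, 0 < p) ∧ ∑ r : Fin l, (lam r).sum = d}
      {μ : Multiset ℕ |
        (∀ p ∈ μ, 0 < p) ∧ Multiset.card μ + (μ.map (fun p => p / l)).sum ≤ d} := by
  have hl0 : 0 < l := hl
  -- MapsTo φ
  have hMapsTo : Set.MapsTo (phiMap l)
      {lam : Fin l → Multiset ℕ |
        (∀ r, ∀ p ∈ lam r, 0 < p) ∧ ∑ r : Fin l, (lam r).sum = d}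
      {μ : Multiset ℕ |
        (∀ p ∈ μ, 0 < p) ∧ Multiset.card μ + (μ.map (fun p => p / l)).sum ≤ d} := by
    rintro lam ⟨hpos, hsum⟩
    refine ⟨fun p hp => (Multiset.mem_filter.mp hp).2, ?_⟩
    have := phi_key l d hl0 lam hpos hsum
    omega
  -- MapsTo ψ
  have hMapsTo' : Set.MapsTo (psiMap l d)
      {μ : Multiset ℕ |
        (∀ p ∈ μ, 0 < p) ∧ Multiset.card μ + (μ.map (fun p => p / l)).sum ≤ d}
      {lam : Fin l → Multiset ℕ |
        (∀ r, ∀ p ∈ lam r, 0 < p) ∧ ∑ r : Fin l, (lam r).sum = d} := by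
    rintro μ ⟨hpos, hle⟩
    constructor
    · intro r p hp
      rcases Multiset.mem_add.mp hp with h | h
      · obtain ⟨x, -, rfl⟩ := Multiset.mem_map.mp h
        exact Nat.succ_pos _
      · split at h
        · rw [Multiset.eq_of_mem_replicate h]; omega
        · simp at h
    · -- sum is d
      have h1 : ∀ r : Fin l, (psiMap l d μ r).sum
          = ((μ.filter (fun x => x % l = r.val)).map (fun x => x / l + 1)).sum
            + (if r.val = 0 then d - (Multiset.card μ + (μ.map (fun p => p / l)).sum) else 0) := by
        intro r
        rw [psiMap, Multiset.sum_add]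
        congr 1
        split <;> simp [Multiset.sum_replicate]
      rw [Finset.sum_congr rfl fun r _ => h1 r, Finset.sum_add_distrib,
        ite_zero_sum l hl0, ← msum_sum, ← mmap_sum, filter_res_partition l hl0]
      rw [sum_divsucc l μ]
      omega
  refine Set.InvOn.bijOn ⟨?_, ?_⟩ hMapsTo hMapsTo'
  · -- LeftInvOn : ψ (φ lam) = lam
    rintro lam ⟨hpos, hsum⟩
    have hkey := phi_key l d hl0 lam hpos hsum
    set S := ∑ r : Fin l, (lam r).map (fun p => (p - 1) * l + r.val) with hSdef
    have hphi : phiMap l lam = S.filter (fun p => 0 < p) := rfl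
    have hdec : S = phiMap l lam + Multiset.replicate (S.count 0) 0 := by
      rw [hphi]; exact pos_decomp S
    funext r
    have hA : S.filter (fun x => x % l = r.val)
        = (lam r).map (fun p => (p - 1) * l + r.val) := S_filter_res l lam r
    rw [hdec] at hA
    rw [Multiset.filter_add] at hA
    by_cases hr : r.val = 0
    · have hfr : (Multiset.replicate (S.count 0) 0).filter (fun x => x % l = r.val)
          = Multiset.replicate (S.count 0) 0 := by
        rw [Multiset.filter_eq_self]
        intro a ha
        rw [Multiset.eq_of_mem_replicate ha, hr]
        exact Nat.zero_mod l
      rw [hfr] at hA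
      have := congrArg (Multiset.map (fun x => x / l + 1)) hA
      rw [Multiset.map_add, Multiset.map_replicate, map_recover l hl0 r _ (hpos r)] at this
      simp only [Nat.zero_div, Nat.zero_add] at this
      rw [psiMap, if_pos hr]
      have hk : d - (Multiset.card (phiMap l lam)
          + ((phiMap l lam).map (fun p => p / l)).sum) = S.count 0 := by omega
      rw [hk]
      exact this
    · have hfr : (Multiset.replicate (S.count 0) 0).filter (fun x => x % l = r.val)
          = 0 := by
        rw [Multiset.filter_eq_nil]
        intro a ha
        rw [Multiset.eq_of_mem_replicate ha]
        simp [Nat.zero_mod]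
        omega
      rw [hfr, add_zero] at hA
      rw [psiMap, if_neg hr, add_zero, hA, map_recover l hl0 r _ (hpos r)]
  · -- RightInvOn : φ (ψ μ) = μ
    rintro μ ⟨hpos, hle⟩
    set k := d - (Multiset.card μ + (μ.map (fun p => p / l)).sum) with hk
    have hterm : ∀ r : Fin l, (psiMap l d μ r).map (fun p => (p - 1) * l + r.val)
        = μ.filter (fun x => x % l = r.val) + (if r.val = 0 then Multiset.replicate k 0 else 0) := by
      intro r
      rw [psiMap, Multiset.map_add]
      congr 1
      · rw [Multiset.map_map]
        have : ∀ x ∈ μ.filter (fun y => y % l = r.val),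
            ((fun p => (p - 1) * l + r.val) ∘ fun x => x / l + 1) x = id x := by
          intro x hx
          have hxr : x % l = r.val := (Multiset.mem_filter.mp hx).2
          simp only [Function.comp, Nat.add_sub_cancel, id]
          rw [← hxr, Nat.div_add_mod' x l]
        rw [Multiset.map_congr rfl this, Multiset.map_id]
      · split
        · rename_i h
          rw [Multiset.map_replicate]
          simp [h]
          rw [hk]
        · simp
    rw [phiMap, Finset.sum_congr rfl fun r _ => hterm r, Finset.sum_add_distrib,
      filter_res_partition l hl0, ite_zero_sum l hl0, Multiset.filter_add]
    have h1 : μ.filter (fun p => 0 < p) = μ := Multiset.filter_eq_self.mpr hpos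
    have h2 : (Multiset.replicate k 0).filter (fun p => 0 < p) = 0 := by
      rw [Multiset.filter_eq_nil]
      intro a ha
      rw [Multiset.eq_of_mem_replicate ha]
      omega
    rw [h1, h2, add_zero]
end
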